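/- For $k \ge 3$, the bipartite incidence graph $D_k(q)$ has girth at least 8. -/

import Mathlib

/-!
Moment vectors `mvec k z` for at most `k` distinct `z` are linearly independent (Vandermonde).
Hence two lines with two common points have the same direction and coincide, and for `k ≥ 3`
no three lines form a triangle, since going around it would give a nontrivial relation between
three moment vectors. In the bipartite incidence graph of such a geometry every cycle is even,
and a 4- or 6-cycle would be a digon or a triangle, so all cycles have length at least 8.
The girth of an acyclic graph is 0 by convention, so we also exhibit a cycle: a parallelogram.
-/

/-- The moment-curve vector `(1, z, z^2, ..., z^(k-1))` in `F^k`. -/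
def mvec (k : ℕ) {F : Type} [Field F] (z : F) : Fin k → F := fun j => z ^ (j : ℕ)

/-- The moment-curve line through `x` with direction parameter `z`. -/
def mline (k : ℕ) {F : Type} [Field F] (x : Fin k → F) (z : F) : Set (Fin k → F) :=
  {p | ∃ y : F, p = x + y • mvec k z}

/-- The bipartite point-line incidence graph `D_k(q)`. -/
def incGraph (k : ℕ) (F : Type) [Field F] :
    SimpleGraph ((Fin k → F) ⊕ {L : Set (Fin k → F) // ∃ x z, L = mline k x z}) :=
  SimpleGraph.fromRel (fun a b =>
    match a, b with
    | Sum.inl p, Sum.inr L => p ∈ L.1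
    | _, _ => False)

open SimpleGraph

section MomentCurve

variable {F : Type} [Field F] {k : ℕ}

@[simp] lemma mvec_apply (z : F) (j : Fin k) : mvec k z j = z ^ (j : ℕ) := rfl

theorem linearIndependent_mvec {n : ℕ} (hn : n ≤ k) {z : Fin n → F}
    (hz : Function.Injective z) : LinearIndependent F fun i => mvec k (z i) := by
  refine LinearIndependent.of_comp (LinearMap.funLeft F F (Fin.castLE hn)) ?_
  exact Matrix.linearIndependent_rows_of_det_ne_zero (Matrix.det_vandermonde_ne_zero_iff.2 hz)

lemma mline_eq_of_mem {x p : Fin k → F} {z : F} (hp : p ∈ mline k x z) :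
    mline k x z = mline k p z := by
  obtain ⟨y, rfl⟩ := hp
  ext q
  constructor
  · rintro ⟨t, rfl⟩
    exact ⟨t - y, by module⟩
  · rintro ⟨t, rfl⟩
    exact ⟨y + t, by module⟩

lemma mline_eq_of_mem_of_mem {x x' p : Fin k → F} {z : F} (hp : p ∈ mline k x z)
    (hp' : p ∈ mline k x' z) : mline k x z = mline k x' z :=
  (mline_eq_of_mem hp).trans (mline_eq_of_mem hp').symm

lemma exists_sub_eq_smul_of_mem_mline {x p q : Fin k → F} {z : F} (hp : p ∈ mline k x z)
    (hq : q ∈ mline k x z) : ∃ t : F, p - q = t • mvec k z := by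
  obtain ⟨s, rfl⟩ := hp
  obtain ⟨t, rfl⟩ := hq
  exact ⟨s - t, by module⟩

lemma mline_eq_of_ne_of_mem (hk : 2 ≤ k) {x x' p q : Fin k → F} {z z' : F} (hpq : p ≠ q)
    (hp : p ∈ mline k x z) (hq : q ∈ mline k x z)
    (hp' : p ∈ mline k x' z') (hq' : q ∈ mline k x' z') :
    mline k x z = mline k x' z' := by
  rcases eq_or_ne z z' with rfl | hz
  · exact mline_eq_of_mem_of_mem hp hp'
  obtain ⟨s, hs⟩ := exists_sub_eq_smul_of_mem_mline hp hq
  obtain ⟨t, ht⟩ := exists_sub_eq_smul_of_mem_mline hp' hq'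
  have hind : LinearIndependent F ![mvec k z, mvec k z'] := by
    convert linearIndependent_mvec (z := ![z, z']) hk ?_ using 1
    · ext i; fin_cases i <;> rfl
    · intro i j; fin_cases i <;> fin_cases j <;> simp [hz, hz.symm]
  have hs0 : s = 0 :=
    (LinearIndependent.pair_iff.1 hind s (-t) (by rw [← hs, neg_smul, ← ht, add_neg_cancel])).1
  exact absurd (sub_eq_zero.1 (by rw [hs, hs0, zero_smul])) hpq

lemma eq_of_mem_mline_triangle (hk : 3 ≤ k) {x₁ x₂ x₃ p q r : Fin k → F} {z₁ z₂ z₃ : F}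
    (h₁₂ : mline k x₁ z₁ ≠ mline k x₂ z₂) (h₁₃ : mline k x₁ z₁ ≠ mline k x₃ z₃)
    (h₂₃ : mline k x₂ z₂ ≠ mline k x₃ z₃)
    (hp₁ : p ∈ mline k x₁ z₁) (hq₁ : q ∈ mline k x₁ z₁) (hq₂ : q ∈ mline k x₂ z₂)
    (hr₂ : r ∈ mline k x₂ z₂) (hr₃ : r ∈ mline k x₃ z₃) (hp₃ : p ∈ mline k x₃ z₃) : p = q := by
  have hz₁₂ : z₁ ≠ z₂ := by rintro rfl; exact h₁₂ (mline_eq_of_mem_of_mem hq₁ hq₂)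
  have hz₁₃ : z₁ ≠ z₃ := by rintro rfl; exact h₁₃ (mline_eq_of_mem_of_mem hp₁ hp₃)
  have hz₂₃ : z₂ ≠ z₃ := by rintro rfl; exact h₂₃ (mline_eq_of_mem_of_mem hr₂ hr₃)
  obtain ⟨s, hs⟩ := exists_sub_eq_smul_of_mem_mline hp₁ hq₁
  obtain ⟨t, ht⟩ := exists_sub_eq_smul_of_mem_mline hq₂ hr₂
  obtain ⟨u, hu⟩ := exists_sub_eq_smul_of_mem_mline hr₃ hp₃
  have hind := linearIndependent_mvec (z := ![z₁, z₂, z₃]) hk (by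
    intro i j
    fin_cases i <;> fin_cases j <;> simp [hz₁₂, hz₁₃, hz₂₃, hz₁₂.symm, hz₁₃.symm, hz₂₃.symm])
  have hs0 : s = 0 := by
    refine Fintype.linearIndependent_iff.1 hind ![s, t, u] ?_ 0
    simp only [Fin.sum_univ_three, Matrix.cons_val_zero, Matrix.cons_val_one, Matrix.cons_val_two,
      Matrix.vecHead, Matrix.vecTail, Function.comp_apply, Fin.succ_zero_eq_one]
    rw [← hs, ← ht, ← hu]
    abel
  rw [← sub_eq_zero, hs, hs0, zero_smul]

end MomentCurve

section IncidenceGraph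

variable {P L : Type*}

def incidenceGraph (I : P → L → Prop) : SimpleGraph (P ⊕ L) :=
  SimpleGraph.fromRel fun a b =>
    match a, b with
    | .inl p, .inr l => I p l
    | _, _ => False

def IsPartialLinearSpace (I : P → L → Prop) : Prop :=
  ∀ ⦃p p' : P⦄ ⦃l l' : L⦄, p ≠ p' → I p l → I p' l → I p l' → I p' l' → l = l'

def IsTriangleFree (I : P → L → Prop) : Prop :=
  ∀ ⦃p₁ p₂ p₃ : P⦄ ⦃l₁ l₂ l₃ : L⦄, p₁ ≠ p₂ → p₁ ≠ p₃ → p₂ ≠ p₃ → l₁ ≠ l₂ → l₁ ≠ l₃ → l₂ ≠ l₃ →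
    I p₁ l₁ → I p₂ l₁ → I p₂ l₂ → I p₃ l₂ → I p₃ l₃ → I p₁ l₃ → False

namespace incidenceGraph

variable {I : P → L → Prop} {p p' : P} {l l' : L}

@[simp] lemma adj_inl_inr : (incidenceGraph I).Adj (.inl p) (.inr l) ↔ I p l := by
  simp [incidenceGraph]

@[simp] lemma adj_inr_inl : (incidenceGraph I).Adj (.inr l) (.inl p) ↔ I p l := by
  simp [incidenceGraph]

@[simp] lemma not_adj_inl_inl : ¬ (incidenceGraph I).Adj (.inl p) (.inl p') := by
  simp [incidenceGraph]

@[simp] lemma not_adj_inr_inr : ¬ (incidenceGraph I).Adj (.inr l) (.inr l') := by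
  simp [incidenceGraph]

def sideColoring (I : P → L → Prop) : (incidenceGraph I).Coloring Bool :=
  Coloring.mk Sum.isLeft <| by rintro (_ | _) (_ | _) h <;> simp_all

lemma isLeft_ne_of_adj {a b : P ⊕ L} (h : (incidenceGraph I).Adj a b) : a.isLeft ≠ b.isLeft :=
  (sideColoring I).valid h

lemma even_length {a : P ⊕ L} (w : (incidenceGraph I).Walk a a) : Even w.length :=
  ((sideColoring I).even_length_iff_congr w).2 Iff.rfl

lemma false_of_square (hI : IsPartialLinearSpace I) {a b c d : P ⊕ L}
    (hab : (incidenceGraph I).Adj a b) (hbc : (incidenceGraph I).Adj b c)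
    (hcd : (incidenceGraph I).Adj c d) (hda : (incidenceGraph I).Adj d a)
    (hac : a ≠ c) (hbd : b ≠ d) : False := by
  wlog ha : a.isLeft generalizing a b c d
  · exact this hbc hcd hda hab hbd hac.symm (by simpa [ha] using (isLeft_ne_of_adj hab).symm)
  obtain (p | _) := a; swap; · simp at ha
  obtain (_ | l) := b; · simp at hab
  obtain (p' | _) := c; swap; · simp at hbc
  obtain (_ | l') := d; · simp at hcd
  simp only [adj_inl_inr, adj_inr_inl, ne_eq, Sum.inl.injEq, Sum.inr.injEq] at *
  exact hbd (hI hac hab hbc hda hcd)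

lemma false_of_hexagon (hI : IsTriangleFree I) {a b c d e f : P ⊕ L}
    (hab : (incidenceGraph I).Adj a b) (hbc : (incidenceGraph I).Adj b c)
    (hcd : (incidenceGraph I).Adj c d) (hde : (incidenceGraph I).Adj d e)
    (hef : (incidenceGraph I).Adj e f) (hfa : (incidenceGraph I).Adj f a)
    (hac : a ≠ c) (hae : a ≠ e) (hce : c ≠ e) (hbd : b ≠ d) (hbf : b ≠ f) (hdf : d ≠ f) :
    False := by
  wlog ha : a.isLeft generalizing a b c d e f
  · exact this hbc hcd hde hef hfa hab hbd hbf hdf hce hac.symm hae.symm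
      (by simpa [ha] using (isLeft_ne_of_adj hab).symm)
  obtain (p₁ | _) := a; swap; · simp at ha
  obtain (_ | l₁) := b; · simp at hab
  obtain (p₂ | _) := c; swap; · simp at hbc
  obtain (_ | l₂) := d; · simp at hcd
  obtain (p₃ | _) := e; swap; · simp at hde
  obtain (_ | l₃) := f; · simp at hef
  simp only [adj_inl_inr, adj_inr_inl, ne_eq, Sum.inl.injEq, Sum.inr.injEq] at *
  exact hI hac hae hce hbd hbf hdf hab hbc hcd hde hef hfa

theorem eight_le_length_of_isCycle (h₄ : IsPartialLinearSpace I) (h₆ : IsTriangleFree I)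
    {a : P ⊕ L} {w : (incidenceGraph I).Walk a a} (hw : w.IsCycle) : 8 ≤ w.length := by
  set n := w.length
  set v := w.getVert
  have h3 : 3 ≤ n := hw.three_le_length
  have hadj (i : ℕ) (hi : i < n := by omega) : (incidenceGraph I).Adj (v i) (v (i + 1)) :=
    w.adj_getVert_succ hi
  have hne (i j : ℕ) (hi : 1 ≤ i ∧ i ≤ n := by omega) (hj : 1 ≤ j ∧ j ≤ n := by omega)
      (hij : i ≠ j := by omega) : v i ≠ v j :=
    fun h => hij (hw.getVert_injOn hi hj h)
  have hclose : (incidenceGraph I).Adj (v n) (v 1) := by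
    simpa [v, n, Walk.getVert_length, Walk.getVert_zero] using hadj 0
  by_contra! h8
  obtain h | h : n = 4 ∨ n = 6 := by obtain ⟨m, hm⟩ := even_length w; omega
  · rw [h] at hclose
    exact false_of_square h₄ (hadj 1) (hadj 2) (hadj 3) hclose (hne 1 3) (hne 2 4)
  · rw [h] at hclose
    exact false_of_hexagon h₆ (hadj 1) (hadj 2) (hadj 3) (hadj 4) (hadj 5) hclose
      (hne 1 3) (hne 1 5) (hne 3 5) (hne 2 4) (hne 2 6) (hne 4 6)

theorem eight_le_girth (h₄ : IsPartialLinearSpace I) (h₆ : IsTriangleFree I)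
    (h : ¬ (incidenceGraph I).IsAcyclic) : 8 ≤ (incidenceGraph I).girth := by
  obtain ⟨a, w, hw, hg⟩ := exists_girth_eq_length.2 h
  exact hg ▸ eight_le_length_of_isCycle h₄ h₆ hw

end incidenceGraph

end IncidenceGraph

section MomentIncidence

variable {F : Type} [Field F] {k : ℕ}

abbrev MomentLine (k : ℕ) (F : Type) [Field F] : Type :=
  {L : Set (Fin k → F) // ∃ x z, L = mline k x z}

lemma incGraph_eq_incidenceGraph :
    incGraph k F = incidenceGraph fun p (L : MomentLine k F) => p ∈ L.1 := by
  ext (_ | _) (_ | _) <;> simp [incGraph]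

lemma isPartialLinearSpace_mline (hk : 2 ≤ k) :
    IsPartialLinearSpace fun p (L : MomentLine k F) => p ∈ L.1 := by
  rintro p p' ⟨_, x, z, rfl⟩ ⟨_, x', z', rfl⟩ hpp' hp hp' hpl hpl'
  exact Subtype.ext (mline_eq_of_ne_of_mem hk hpp' hp hp' hpl hpl')

lemma isTriangleFree_mline (hk : 3 ≤ k) :
    IsTriangleFree fun p (L : MomentLine k F) => p ∈ L.1 := by
  rintro p₁ p₂ p₃ ⟨_, x₁, z₁, rfl⟩ ⟨_, x₂, z₂, rfl⟩ ⟨_, x₃, z₃, rfl⟩ hp₁₂ - - hl₁₂ hl₁₃ hl₂₃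
    h₁₁ h₂₁ h₂₂ h₃₂ h₃₃ h₁₃
  exact hp₁₂ (eq_of_mem_mline_triangle hk (fun h => hl₁₂ (Subtype.ext h))
    (fun h => hl₁₃ (Subtype.ext h)) (fun h => hl₂₃ (Subtype.ext h)) h₁₁ h₂₁ h₂₂ h₃₂ h₃₃ h₁₃)

theorem incGraph_not_isAcyclic (hk : 2 ≤ k) : ¬ (incGraph k F).IsAcyclic := by
  set e := mvec k (0 : F)
  set u := mvec k (1 : F)
  let l₁ : MomentLine k F := ⟨mline k 0 0, 0, 0, rfl⟩
  let l₂ : MomentLine k F := ⟨mline k e 1, e, 1, rfl⟩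
  let l₃ : MomentLine k F := ⟨mline k u 0, u, 0, rfl⟩
  let l₄ : MomentLine k F := ⟨mline k 0 1, 0, 1, rfl⟩
  have he : (0 : Fin k → F) ≠ e := fun h => by simpa [e] using congrFun h ⟨0, by omega⟩
  have hu : (0 : Fin k → F) ≠ u := fun h => by simpa [u] using congrFun h ⟨0, by omega⟩
  have heu : (0 : Fin k → F) ≠ e + u := fun h => by simpa [e, u] using congrFun h ⟨1, by omega⟩
  have hl : l₁ ≠ l₄ := by
    intro h
    have hu₁ : u ∈ l₁.1 := h ▸ ⟨1, by simp [u]⟩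
    obtain ⟨y, hy⟩ := hu₁
    simpa [u] using congrFun hy ⟨1, by omega⟩
  rw [incGraph_eq_incidenceGraph, isAcyclic_iff_forall_adj_isBridge]
  set G := incidenceGraph fun p (L : MomentLine k F) => p ∈ L.1
  have inc (p : Fin k → F) (L : MomentLine k F) (h : p ∈ L.1) : G.Adj (.inl p) (.inr L) :=
    incidenceGraph.adj_inl_inr.2 h
  -- The parallelogram `0, e, e + u, u` closes the edge `0 — l₁` into an 8-cycle.
  let detour : G.Walk (.inl 0) (.inr l₁) :=
    .cons (inc 0 l₄ ⟨0, by simp⟩) <| .cons (inc u l₄ ⟨1, by simp [u]⟩).symm <|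
    .cons (inc u l₃ ⟨0, by simp⟩) <| .cons (inc (e + u) l₃ ⟨1, by simp [e, add_comm]⟩).symm <|
    .cons (inc (e + u) l₂ ⟨1, by simp [u]⟩) <| .cons (inc e l₂ ⟨0, by simp⟩).symm <|
    .cons (inc e l₁ ⟨1, by simp [e]⟩) .nil
  intro hbridge
  have := isBridge_iff_forall_walk_mem_edges.1 (hbridge (inc 0 l₁ ⟨0, by simp⟩)) detour
  simp [detour, he, hu, heu, hl] at this

end MomentIncidence

theorem stmt_17_general (k : ℕ) (hk : 3 ≤ k) (F : Type) [Field F] :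
    8 ≤ (incGraph k F).girth := by
  have hcyc := incGraph_not_isAcyclic (F := F) (by omega : 2 ≤ k)
  rw [incGraph_eq_incidenceGraph] at hcyc ⊢
  exact incidenceGraph.eight_le_girth (isPartialLinearSpace_mline (by omega))
    (isTriangleFree_mline hk) hcyc

/-- For `k ≥ 3`, the incidence graph `D_k(q)` has girth at least 8. -/
theorem stmt_17 (k : ℕ) (hk : 3 ≤ k) (F : Type) [Field F] [Fintype F] :
    8 ≤ (incGraph k F).girth :=
  stmt_17_general k hk F
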